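/- Let ℬ_1,…,ℬ_k be pairwise disjoint closed sub-arrangements of a set-arrangement 𝒜 on X with ⋃_i ℬ_i = 𝒜, and let L be a Lie algebra of 𝒜. Then π_{ℬ_i}' ∘ s_{ℬ_j}' = 0 for i ≠ j, π' ∘ s' = id on ⊕_i L_{ℬ_i}', π' is surjective, s' is injective, and the C-submodule im(s') = Σ_i im(s_{ℬ_i}') of L' is an internal direct sum of the submodules im(s_{ℬ_i}'). -/

import Mathlib

open FreeLieAlgebra

/-- A set-arrangement on `X`: every member has at least two elements, two distinct members
meet in at most one element, and the union of all members is `X`. -/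
def IsSetArrangement {X : Type*} (𝒜 : Set (Set X)) : Prop :=
  (∀ A ∈ 𝒜, 2 ≤ A.ncard) ∧
    (∀ A ∈ 𝒜, ∀ B ∈ 𝒜, A ≠ B → (A ∩ B).Subsingleton) ∧
    ⋃₀ 𝒜 = Set.univ

variable (C : Type*) [CommRing C] {X : Type*}

/-- The inclusion `F(A) → F(X)` of free Lie algebras. -/
noncomputable def inclX (A : Set X) : FreeLieAlgebra C A →ₗ⁅C⁆ FreeLieAlgebra C X :=
  FreeLieAlgebra.lift C fun a => FreeLieAlgebra.of C (a : X)

/-- The inclusion `F(A) → F(S)` of free Lie algebras along `A ⊆ S`. -/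
noncomputable def inclSub {A S : Set X} (h : A ⊆ S) :
    FreeLieAlgebra C A →ₗ⁅C⁆ FreeLieAlgebra C S :=
  FreeLieAlgebra.lift C fun a => FreeLieAlgebra.of C (⟨a.1, h a.2⟩ : S)

/-- Admissibility of the relations: `R_A ⊆ [F(A), F(A)]`. -/
def AdmissibleRel (𝒜 : Set (Set X)) (Rel : ∀ A : Set X, Set (FreeLieAlgebra C A)) : Prop :=
  ∀ A ∈ 𝒜, Rel A ⊆ (LieAlgebra.derivedSeries C (FreeLieAlgebra C A) 1 : Set (FreeLieAlgebra C A))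

/-- The defining ideal of a Lie algebra of a set-arrangement: generated by all `⁅x,y⁆` for
pairs not contained in any member of `𝒜`, together with the relations `R_A`, `A ∈ 𝒜`. -/
noncomputable def definingIdeal (𝒜 : Set (Set X)) (Rel : ∀ A : Set X, Set (FreeLieAlgebra C A)) :
    LieIdeal C (FreeLieAlgebra C X) :=
  LieSubmodule.lieSpan C (FreeLieAlgebra C X)
    ({z | ∃ x y : X, (∀ A ∈ 𝒜, ¬({x, y} : Set X) ⊆ A) ∧ z = ⁅of C x, of C y⁆} ∪
      ⋃ A, ⋃ (_ : A ∈ 𝒜), inclX C A '' Rel A)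

/-- The Lie algebra `L` of the set-arrangement `𝒜` with relations `Rel`. -/
noncomputable abbrev ArrLie (𝒜 : Set (Set X)) (Rel : ∀ A : Set X, Set (FreeLieAlgebra C A)) :=
  FreeLieAlgebra C X ⧸ definingIdeal C 𝒜 Rel

/-- The quotient map `F(X) → L`. -/
noncomputable def arrMk (𝒜 : Set (Set X)) (Rel : ∀ A : Set X, Set (FreeLieAlgebra C A)) :
    FreeLieAlgebra C X → ArrLie C 𝒜 Rel :=
  LieSubmodule.Quotient.mk (N := definingIdeal C 𝒜 Rel)

/-- The ideal `⟨R_A⟩` of `F(A)`. -/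
noncomputable def locIdeal (A : Set X) (Rel : ∀ A : Set X, Set (FreeLieAlgebra C A)) :
    LieIdeal C (FreeLieAlgebra C A) :=
  LieSubmodule.lieSpan C (FreeLieAlgebra C A) (Rel A)

/-- The localized Lie algebra `L_A = F(A)/⟨R_A⟩`. -/
noncomputable abbrev LocLie (A : Set X) (Rel : ∀ A : Set X, Set (FreeLieAlgebra C A)) :=
  FreeLieAlgebra C A ⧸ locIdeal C A Rel

/-- The quotient map `F(A) → L_A`. -/
noncomputable def locMk (A : Set X) (Rel : ∀ A : Set X, Set (FreeLieAlgebra C A)) :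
    FreeLieAlgebra C A → LocLie C A Rel :=
  LieSubmodule.Quotient.mk (N := locIdeal C A Rel)

open Classical in
/-- The canonical Lie algebra map `F(X) → L_A` killing the generators outside `A`. -/
noncomputable def locProj (A : Set X) (Rel : ∀ A : Set X, Set (FreeLieAlgebra C A)) :
    FreeLieAlgebra C X →ₗ⁅C⁆ LocLie C A Rel :=
  FreeLieAlgebra.lift C fun x : X =>
    if h : x ∈ A then locMk C A Rel (of C (⟨x, h⟩ : A)) else 0

/-- The replacement condition. -/
def ReplacementCond (𝒜 : Set (Set X)) (Rel : ∀ A : Set X, Set (FreeLieAlgebra C A)) : Prop :=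
  ∀ A ∈ 𝒜, 3 ≤ A.ncard → ∀ x ∈ A, (∃ B ∈ 𝒜, B ≠ A ∧ x ∈ B) →
    (LieAlgebra.derivedSeries C (LocLie C A Rel) 1 : Set (LocLie C A Rel)) ⊆
      (LieSubalgebra.lieSpan C (LocLie C A Rel)
        {z | ∃ a : A, (a : X) ≠ x ∧ z = locMk C A Rel (of C a)} : Set (LocLie C A Rel))

/-- Lie monomials of weight `n` with respect to a weighting `d` of the generators. -/
inductive IsLieMonomial (d : X → ℕ) : FreeLieAlgebra C X → ℕ → Prop
  | of (x : X) : IsLieMonomial d (of C x) (d x)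
  | lie {u v : FreeLieAlgebra C X} {m n : ℕ} :
      IsLieMonomial d u m → IsLieMonomial d v n → IsLieMonomial d ⁅u, v⁆ (m + n)

/-- Homogeneity of an element of the free Lie algebra with respect to a weighting. -/
def IsHomogeneous (d : X → ℕ) (r : FreeLieAlgebra C X) : Prop :=
  ∃ n : ℕ, r ∈ Submodule.span C {u | IsLieMonomial C d u n}

/-- The support of a sub-arrangement. -/
def arrSupp {X : Type*} (ℬ : Set (Set X)) : Set X := ⋃₀ ℬ

/-- `ℬ` is a closed sub-arrangement of `𝒜`. -/
def IsClosedSub {X : Type*} (𝒜 ℬ : Set (Set X)) : Prop :=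
  ℬ ⊆ 𝒜 ∧ ∀ A ∈ 𝒜, A ∉ ℬ → (A ∩ arrSupp ℬ).Subsingleton

/-- The relations `R_ℬ` of a sub-arrangement. -/
noncomputable def subRel (ℬ : Set (Set X)) (Rel : ∀ A : Set X, Set (FreeLieAlgebra C A)) :
    Set (FreeLieAlgebra C (arrSupp ℬ)) :=
  (⋃ B, ⋃ h : B ∈ ℬ, inclSub C (Set.subset_sUnion_of_mem h) '' Rel B) ∪
    {z | ∃ x y : arrSupp ℬ, (∀ B ∈ ℬ, ¬({(x : X), (y : X)} : Set X) ⊆ B) ∧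
      z = ⁅of C x, of C y⁆}

/-- The ideal `⟨R_ℬ⟩` of `F(supp ℬ)`. -/
noncomputable def subIdeal (ℬ : Set (Set X)) (Rel : ∀ A : Set X, Set (FreeLieAlgebra C A)) :
    LieIdeal C (FreeLieAlgebra C (arrSupp ℬ)) :=
  LieSubmodule.lieSpan C (FreeLieAlgebra C (arrSupp ℬ)) (subRel C ℬ Rel)

/-- The localized Lie algebra `L_ℬ` at a sub-arrangement. -/
noncomputable abbrev SubLie (ℬ : Set (Set X)) (Rel : ∀ A : Set X, Set (FreeLieAlgebra C A)) :=
  FreeLieAlgebra C (arrSupp ℬ) ⧸ subIdeal C ℬ Rel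

/-- The quotient map `F(supp ℬ) → L_ℬ`. -/
noncomputable def subMk (ℬ : Set (Set X)) (Rel : ∀ A : Set X, Set (FreeLieAlgebra C A)) :
    FreeLieAlgebra C (arrSupp ℬ) → SubLie C ℬ Rel :=
  LieSubmodule.Quotient.mk (N := subIdeal C ℬ Rel)

open Classical in
/-- The canonical Lie algebra map `F(X) → L_ℬ` killing the generators outside `supp ℬ`. -/
noncomputable def subProj (ℬ : Set (Set X)) (Rel : ∀ A : Set X, Set (FreeLieAlgebra C A)) :
    FreeLieAlgebra C X →ₗ⁅C⁆ SubLie C ℬ Rel :=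
  FreeLieAlgebra.lift C fun x : X =>
    if h : x ∈ arrSupp ℬ then subMk C ℬ Rel (of C (⟨x, h⟩ : arrSupp ℬ)) else 0

/-!
For `i ≠ j` the composite `π_{ℬ_i} ∘ s_{ℬ_j}` sends each generator of `L_{ℬ_j}` either to zero or
to a generator of `L_{ℬ_i}`; any two such generators `a, b` commute in `L_{ℬ_i}`, since either no
member of `ℬ_i` contains `{a, b}` (and `⁅a, b⁆` is a defining relation) or some `B ∈ ℬ_i` does, and
closedness of `ℬ_j` forces `a = b`. Hence the composite has abelian image and kills the derived
subalgebra. Together with `π_{ℬ_i} ∘ s_{ℬ_i} = id`, this makes `π'` a left inverse of `s'`, from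
which surjectivity, injectivity and directness all follow.
-/

namespace LieIdeal

variable {R L : Type*} [CommRing R] [LieRing L] [LieAlgebra R L]

noncomputable def mkQ (I : LieIdeal R L) : L →ₗ⁅R⁆ L ⧸ I :=
  { (I : Submodule R L).mkQ with map_lie' := rfl }

lemma mkQ_surjective (I : LieIdeal R L) : Function.Surjective I.mkQ := Quot.mk_surjective

end LieIdeal

namespace LieHom

variable {R L L' : Type*} [CommRing R] [LieRing L] [LieAlgebra R L] [LieRing L'] [LieAlgebra R L']

lemma map_eq_zero_of_mem_derivedSeries_one (f : L →ₗ⁅R⁆ L') (h : ∀ u v, ⁅f u, f v⁆ = 0)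
    {z : L} (hz : z ∈ LieAlgebra.derivedSeries R L 1) : f z = 0 := by
  have hle : LieAlgebra.derivedSeries R L 1 ≤ f.ker := by
    rw [LieAlgebra.derivedSeries_def, LieAlgebra.derivedSeriesOfIdeal_succ,
      LieAlgebra.derivedSeriesOfIdeal_zero, LieSubmodule.lie_le_iff]
    intro u _ v _
    rw [LieHom.mem_ker, LieHom.map_lie]
    exact h u v
  exact hle hz

end LieHom

namespace FreeLieAlgebra

variable {R L : Type*} [CommRing R] [LieRing L] [LieAlgebra R L]

lemma lieSpan_range_of :
    LieSubalgebra.lieSpan R (FreeLieAlgebra R X) (Set.range (of R (X := X))) = ⊤ := by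
  set K := LieSubalgebra.lieSpan R (FreeLieAlgebra R X) (Set.range (of R))
  have hsection : K.incl.comp (lift R fun x => ⟨of R x, LieSubalgebra.subset_lieSpan ⟨x, rfl⟩⟩) =
      LieHom.id :=
    hom_ext fun x => by simp
  refine eq_top_iff.mpr fun u _ => ?_
  rw [← LieHom.id_apply (R := R) u, ← hsection]
  exact Subtype.prop _

lemma lie_apply_eq_zero_of_lie_of (f : FreeLieAlgebra R X →ₗ⁅R⁆ L)
    (h : ∀ x y, ⁅f (of R x), f (of R y)⁆ = 0) (u v : FreeLieAlgebra R X) : ⁅f u, f v⁆ = 0 := by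
  have hrange : f.range = LieSubalgebra.lieSpan R L (Set.range (f ∘ of R)) := by
    rw [LieHom.range_eq_map, ← lieSpan_range_of, LieSubalgebra.map_lieSpan, Set.range_comp]
  have habelian : IsLieAbelian f.range := by
    rw [hrange, LieSubalgebra.isLieAbelian_lieSpan_iff]
    rintro _ ⟨x, rfl⟩ _ ⟨y, rfl⟩
    exact h x y
  exact congrArg Subtype.val
    (trivial_lie_zero f.range f.range ⟨f u, f.mem_range_self u⟩ ⟨f v, f.mem_range_self v⟩)

lemma quotient_hom_ext {I : LieIdeal R (FreeLieAlgebra R X)}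
    {F₁ F₂ : FreeLieAlgebra R X ⧸ I →ₗ⁅R⁆ L}
    (h : ∀ x, F₁ (I.mkQ (of R x)) = F₂ (I.mkQ (of R x))) : F₁ = F₂ := by
  ext u
  obtain ⟨u, rfl⟩ := I.mkQ_surjective u
  exact LieHom.congr_fun (hom_ext (F₁ := F₁.comp I.mkQ) (F₂ := F₂.comp I.mkQ) h) u

end FreeLieAlgebra

section Localization

variable {C} {𝒜 ℬ ℬ' : Set (Set X)} {Rel : ∀ A : Set X, Set (FreeLieAlgebra C A)}

lemma lie_subProj_of_subProj_of_eq_zero (hℬ : ℬ ⊆ 𝒜) (hℬ' : IsClosedSub 𝒜 ℬ') (hdisj : ℬ ∩ ℬ' = ∅)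
    {x y : X} (hx : x ∈ arrSupp ℬ') (hy : y ∈ arrSupp ℬ') :
    ⁅subProj C ℬ Rel (of C x), subProj C ℬ Rel (of C y)⁆ = 0 := by
  by_cases hxℬ : x ∈ arrSupp ℬ
  swap
  · simp [subProj, hxℬ]
  by_cases hyℬ : y ∈ arrSupp ℬ
  swap
  · simp [subProj, hyℬ]
  simp only [subProj, lift_of_apply, hxℬ, hyℬ, dite_true, subMk]
  rw [← LieSubmodule.Quotient.mk_bracket, LieSubmodule.Quotient.mk_eq_zero']
  by_cases hB : ∃ B ∈ ℬ, ({x, y} : Set X) ⊆ B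
  · obtain ⟨B, hBℬ, hxyB⟩ := hB
    have hBℬ' : B ∉ ℬ' := fun h => Set.eq_empty_iff_forall_notMem.mp hdisj B ⟨hBℬ, h⟩
    obtain rfl : x = y := hℬ'.2 B (hℬ hBℬ) hBℬ' ⟨hxyB (by simp), hx⟩ ⟨hxyB (by simp), hy⟩
    rw [lie_self]
    exact zero_mem _
  · exact LieSubmodule.subset_lieSpan
      (Or.inr ⟨⟨x, hxℬ⟩, ⟨y, hyℬ⟩, fun B hB' hxyB => hB ⟨B, hB', hxyB⟩, rfl⟩)

lemma subLie_map_eq_zero_of_mem_derivedSeries (hℬ : ℬ ⊆ 𝒜) (hℬ' : IsClosedSub 𝒜 ℬ')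
    (hdisj : ℬ ∩ ℬ' = ∅) (φ : SubLie C ℬ' Rel →ₗ⁅C⁆ SubLie C ℬ Rel)
    (hφ : ∀ a : arrSupp ℬ', φ (subMk C ℬ' Rel (of C a)) = subProj C ℬ Rel (of C (a : X)))
    {z : SubLie C ℬ' Rel} (hz : z ∈ LieAlgebra.derivedSeries C (SubLie C ℬ' Rel) 1) : φ z = 0 := by
  refine φ.map_eq_zero_of_mem_derivedSeries_one (fun u v => ?_) hz
  obtain ⟨u, rfl⟩ := (subIdeal C ℬ' Rel).mkQ_surjective u
  obtain ⟨v, rfl⟩ := (subIdeal C ℬ' Rel).mkQ_surjective v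
  refine lie_apply_eq_zero_of_lie_of (φ.comp (subIdeal C ℬ' Rel).mkQ) (fun a b => ?_) u v
  change ⁅φ (subMk C ℬ' Rel (of C a)), φ (subMk C ℬ' Rel (of C b))⁆ = 0
  rw [hφ, hφ]
  exact lie_subProj_of_subProj_of_eq_zero hℬ hℬ' hdisj a.2 b.2

end Localization

theorem statement14_general {C : Type*} [CommRing C] {X : Type*}
    (𝒜 : Set (Set X)) (Rel : ∀ A : Set X, Set (FreeLieAlgebra C A))
    (k : ℕ) (ℬ : Fin k → Set (Set X))
    (hclosed : ∀ i, IsClosedSub 𝒜 (ℬ i))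
    (hdisj : ∀ i j, i ≠ j → ℬ i ∩ ℬ j = ∅)
    (s : ∀ i, SubLie C (ℬ i) Rel →ₗ⁅C⁆ ArrLie C 𝒜 Rel)
    (hs : ∀ i, ∀ a : arrSupp (ℬ i),
      s i (subMk C (ℬ i) Rel (of C a)) = arrMk C 𝒜 Rel (of C (a : X)))
    (π : ∀ i, ArrLie C 𝒜 Rel →ₗ⁅C⁆ SubLie C (ℬ i) Rel)
    (hπ₁ : ∀ i, ∀ a : arrSupp (ℬ i),
      π i (arrMk C 𝒜 Rel (of C (a : X))) = subMk C (ℬ i) Rel (of C a))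
    (hπ₂ : ∀ i, ∀ x : X, x ∉ arrSupp (ℬ i) → π i (arrMk C 𝒜 Rel (of C x)) = 0) :
    -- `π_{ℬ_i}' ∘ s_{ℬ_j}' = 0` for `i ≠ j`
    (∀ i j, i ≠ j →
      ∀ z ∈ (LieAlgebra.derivedSeries C (SubLie C (ℬ j) Rel) 1 : Set (SubLie C (ℬ j) Rel)),
        π i (s j z) = 0) ∧
    -- `π' ∘ s' = id` on `⊕_i L_{ℬ_i}'`
    (∀ z : ∀ i, SubLie C (ℬ i) Rel,
      (∀ i, z i ∈ LieAlgebra.derivedSeries C (SubLie C (ℬ i) Rel) 1) →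
      ∀ j, π j (∑ i, s i (z i)) = z j) ∧
    -- `π'` is surjective onto `⊕_i L_{ℬ_i}'`
    (∀ w : ∀ i, SubLie C (ℬ i) Rel,
      (∀ i, w i ∈ LieAlgebra.derivedSeries C (SubLie C (ℬ i) Rel) 1) →
      ∃ u ∈ LieAlgebra.derivedSeries C (ArrLie C 𝒜 Rel) 1, ∀ i, π i u = w i) ∧
    -- `s'` is injective
    (∀ z w : ∀ i, SubLie C (ℬ i) Rel,
      (∀ i, z i ∈ LieAlgebra.derivedSeries C (SubLie C (ℬ i) Rel) 1) →
      (∀ i, w i ∈ LieAlgebra.derivedSeries C (SubLie C (ℬ i) Rel) 1) →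
      ∑ i, s i (z i) = ∑ i, s i (w i) → z = w) ∧
    -- the sum `Σ_i im(s_{ℬ_i}')` is direct
    (∀ r : Fin k → ArrLie C 𝒜 Rel,
      (∀ i, r i ∈ s i ''
        (LieAlgebra.derivedSeries C (SubLie C (ℬ i) Rel) 1 : Set (SubLie C (ℬ i) Rel))) →
      ∑ i, r i = 0 → ∀ i, r i = 0) := by
  have hπ : ∀ i x, π i (arrMk C 𝒜 Rel (of C x)) = subProj C (ℬ i) Rel (of C x) := by
    intro i x
    by_cases hx : x ∈ arrSupp (ℬ i)
    · simpa [subProj, hx] using hπ₁ i ⟨x, hx⟩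
    · simpa [subProj, hx] using hπ₂ i x hx
  have hid : ∀ i x, π i (s i x) = x := fun i =>
    LieHom.congr_fun (quotient_hom_ext (F₁ := (π i).comp (s i)) (F₂ := LieHom.id)
      fun a => (congrArg (π i) (hs i a)).trans (hπ₁ i a))
  have hkill : ∀ i j, i ≠ j → ∀ z ∈ (LieAlgebra.derivedSeries C (SubLie C (ℬ j) Rel) 1 :
      Set (SubLie C (ℬ j) Rel)), π i (s j z) = 0 := fun i j hij _ hz =>
    subLie_map_eq_zero_of_mem_derivedSeries (hclosed i).1 (hclosed j) (hdisj i j hij)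
      ((π i).comp (s j)) (fun a => (congrArg (π i) (hs j a)).trans (hπ i a)) hz
  have hsum : ∀ z : ∀ i, SubLie C (ℬ i) Rel,
      (∀ i, z i ∈ LieAlgebra.derivedSeries C (SubLie C (ℬ i) Rel) 1) →
      ∀ j, π j (∑ i, s i (z i)) = z j := by
    intro z hz j
    rw [map_sum, Finset.sum_eq_single j (fun i _ hij => hkill j i hij.symm _ (hz i)) (by simp),
      hid]
  refine ⟨hkill, hsum, fun w hw => ⟨∑ i, s i (w i), ?_, hsum w hw⟩,
    fun z w hz hw heq => funext fun j => (hsum z hz j).symm.trans (heq ▸ hsum w hw j), ?_⟩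
  · exact sum_mem fun i _ => LieIdeal.derivedSeries_map_le 1 (LieIdeal.mem_map (hw i))
  · intro r hr hr0 j
    choose z hz hsz using hr
    rw [← hsz j, ← hsum z hz j, Finset.sum_congr rfl fun i _ => hsz i, hr0, map_zero, map_zero]

/-- For pairwise disjoint closed sub-arrangements `ℬ₁, …, ℬ_k` covering `𝒜`:
`π_{ℬ_i}' ∘ s_{ℬ_j}' = 0` for `i ≠ j`, `π' ∘ s' = id` on `⊕_i L_{ℬ_i}'`, `π'` is surjective,
`s'` is injective, and the submodule `im(s') = Σ_i im(s_{ℬ_i}')` of `L'` is an internal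
direct sum. -/
theorem statement14 {C : Type*} [CommRing C] {X : Type*} [Fintype X]
    (𝒜 : Set (Set X)) (Rel : ∀ A : Set X, Set (FreeLieAlgebra C A))
    (h𝒜 : IsSetArrangement 𝒜) (hRel : AdmissibleRel C 𝒜 Rel)
    (k : ℕ) (ℬ : Fin k → Set (Set X))
    (hclosed : ∀ i, IsClosedSub 𝒜 (ℬ i))
    (hdisj : ∀ i j, i ≠ j → ℬ i ∩ ℬ j = ∅)
    (hcover : ⋃ i, ℬ i = 𝒜)
    (s : ∀ i, SubLie C (ℬ i) Rel →ₗ⁅C⁆ ArrLie C 𝒜 Rel)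
    (hs : ∀ i, ∀ a : arrSupp (ℬ i),
      s i (subMk C (ℬ i) Rel (of C a)) = arrMk C 𝒜 Rel (of C (a : X)))
    (π : ∀ i, ArrLie C 𝒜 Rel →ₗ⁅C⁆ SubLie C (ℬ i) Rel)
    (hπ₁ : ∀ i, ∀ a : arrSupp (ℬ i),
      π i (arrMk C 𝒜 Rel (of C (a : X))) = subMk C (ℬ i) Rel (of C a))
    (hπ₂ : ∀ i, ∀ x : X, x ∉ arrSupp (ℬ i) → π i (arrMk C 𝒜 Rel (of C x)) = 0) :
    -- `π_{ℬ_i}' ∘ s_{ℬ_j}' = 0` for `i ≠ j`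
    (∀ i j, i ≠ j →
      ∀ z ∈ (LieAlgebra.derivedSeries C (SubLie C (ℬ j) Rel) 1 : Set (SubLie C (ℬ j) Rel)),
        π i (s j z) = 0) ∧
    -- `π' ∘ s' = id` on `⊕_i L_{ℬ_i}'`
    (∀ z : ∀ i, SubLie C (ℬ i) Rel,
      (∀ i, z i ∈ LieAlgebra.derivedSeries C (SubLie C (ℬ i) Rel) 1) →
      ∀ j, π j (∑ i, s i (z i)) = z j) ∧
    -- `π'` is surjective onto `⊕_i L_{ℬ_i}'`
    (∀ w : ∀ i, SubLie C (ℬ i) Rel,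
      (∀ i, w i ∈ LieAlgebra.derivedSeries C (SubLie C (ℬ i) Rel) 1) →
      ∃ u ∈ LieAlgebra.derivedSeries C (ArrLie C 𝒜 Rel) 1, ∀ i, π i u = w i) ∧
    -- `s'` is injective
    (∀ z w : ∀ i, SubLie C (ℬ i) Rel,
      (∀ i, z i ∈ LieAlgebra.derivedSeries C (SubLie C (ℬ i) Rel) 1) →
      (∀ i, w i ∈ LieAlgebra.derivedSeries C (SubLie C (ℬ i) Rel) 1) →
      ∑ i, s i (z i) = ∑ i, s i (w i) → z = w) ∧
    -- the sum `Σ_i im(s_{ℬ_i}')` is direct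
    (∀ r : Fin k → ArrLie C 𝒜 Rel,
      (∀ i, r i ∈ s i ''
        (LieAlgebra.derivedSeries C (SubLie C (ℬ i) Rel) 1 : Set (SubLie C (ℬ i) Rel))) →
      ∑ i, r i = 0 → ∀ i, r i = 0) :=
  statement14_general 𝒜 Rel k ℬ hclosed hdisj s hs π hπ₁ hπ₂
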